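/- Fix θ ∈ (0,π) and let Q_u = ⋂_{m∈ℤ} H_m ⊂ tildeL with H_m = {(z,α,r) ∈ tildeL : r·cos(α+mθ) ≤ 1 or |α+mθ| ≥ π/2}. Then there exists a continuous function S : ℂ×ℝ → ℝ with S > 0 everywhere such that, writing λ(z,α,r) = √(r² − |z|²), one has Q_u = {(z,α,r) ∈ tildeL : λ(z,α,r) ≤ S(z/λ(z,α,r), α)} and the frontier of Q_u in tildeL equals {(z,α,r) ∈ tildeL : λ(z,α,r) = S(z/λ(z,α,r), α)}; i.e. Q_u is the subgraph of a continuous section of the ℝ₊-bundle tildeL ≅ tildeG × ℝ₊ and its boundary is the graph of that section. -/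

import Mathlib

open Real

/-!
Write `‖α‖` for the distance from `α` to `θℤ`, i.e. the norm of `α` in `AddCircle θ`. Since
`‖α‖ ≤ θ / 2 < π / 2` and `cos` decreases on `[0, π]`, the only half-space `H_m` that cuts at
`(z, α, r)` is one with `|α + mθ| = ‖α‖`, so `Q_u = {r cos ‖α‖ ≤ 1}`. On `tildeL` we have
`r / λ = √(1 + |z / λ|²)`, so this is `λ ≤ S (z / λ, α)` for
`S (w, α) = (√(1 + |w|²) cos ‖α‖)⁻¹`. As `r cos ‖α‖` is strictly increasing in `r`, the frontier
is the level set `{r cos ‖α‖ = 1}`.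
-/

/-- `tildeL = {(z,α,r) ∈ ℂ×ℝ×ℝ : 0 < r, |z| < r}` (an open subset of `ℂ×ℝ×ℝ`,
so the frontier within `tildeL` is the ambient frontier intersected with `tildeL`). -/
def tL : Set (ℂ × ℝ × ℝ) := {x | 0 < x.2.2 ∧ ‖x.1‖ < x.2.2}

/-- `λ(z,α,r) = √(r² − |z|²)`, the fibre coordinate of the bundle `tildeL ≅ tildeG × ℝ₊`. -/
noncomputable def lamb (x : ℂ × ℝ × ℝ) : ℝ := Real.sqrt (x.2.2 ^ 2 - ‖x.1‖ ^ 2)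

/-- `H_m = {(z,α,r) ∈ tildeL : r·cos(α+mθ) ≤ 1 or |α+mθ| ≥ π/2}`. -/
noncomputable def Hhalf (θ : ℝ) (m : ℤ) : Set (ℂ × ℝ × ℝ) :=
  {x ∈ tL | x.2.2 * Real.cos (x.2.1 + (m : ℝ) * θ) ≤ 1 ∨ π / 2 ≤ |x.2.1 + (m : ℝ) * θ|}

/-- The prismatic set `Q_u = ⋂_{m∈ℤ} H_m`. -/
noncomputable def Qu (θ : ℝ) : Set (ℂ × ℝ × ℝ) := ⋂ m : ℤ, Hhalf θ m

namespace AddCircle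

lemma norm_coe_le_abs_add_intCast_mul (θ α : ℝ) (m : ℤ) :
    ‖(α : AddCircle θ)‖ ≤ |α + m * θ| := by
  have h : ((α + m * θ : ℝ) : AddCircle θ) = α := by
    rw [coe_add, ← zsmul_eq_mul, coe_zsmul, coe_period, smul_zero, add_zero]
  simpa [h] using QuotientAddGroup.norm_mk_le_norm (S := AddSubgroup.zmultiples θ) (m := α + m * θ)

lemma exists_abs_add_intCast_mul_eq_norm (θ α : ℝ) :
    ∃ m : ℤ, |α + m * θ| = ‖(α : AddCircle θ)‖ :=
  ⟨-round (θ⁻¹ * α), by rw [norm_eq]; push_cast; ring_nf⟩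

lemma norm_coe_lt_pi_div_two {θ : ℝ} (hθ : 0 < θ) (hθπ : θ < π) (α : ℝ) :
    ‖(α : AddCircle θ)‖ < π / 2 := by
  have := norm_le_half_period θ (x := (α : AddCircle θ)) hθ.ne'
  rw [abs_of_pos hθ] at this
  linarith

lemma cos_norm_coe_pos {θ : ℝ} (hθ : 0 < θ) (hθπ : θ < π) (α : ℝ) :
    0 < cos ‖(α : AddCircle θ)‖ :=
  cos_pos_of_mem_Ioo ⟨by linarith [norm_nonneg (α : AddCircle θ), pi_pos],
    norm_coe_lt_pi_div_two hθ hθπ α⟩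

end AddCircle

open AddCircle in
lemma forall_mul_cos_add_le_one_or_iff {θ r : ℝ} (hθ : 0 < θ) (hθπ : θ < π) (hr : 0 ≤ r)
    (α : ℝ) :
    (∀ m : ℤ, r * cos (α + m * θ) ≤ 1 ∨ π / 2 ≤ |α + m * θ|) ↔
      r * cos ‖(α : AddCircle θ)‖ ≤ 1 := by
  constructor
  · intro h
    obtain ⟨m, hm⟩ := exists_abs_add_intCast_mul_eq_norm θ α
    have hm' := (h m).resolve_right (by rw [hm]; linarith [norm_coe_lt_pi_div_two hθ hθπ α])
    rwa [← cos_abs, hm] at hm'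
  · intro h m
    refine or_iff_not_imp_right.2 fun hm => h.trans' ?_
    rw [← cos_abs]
    gcongr
    exact cos_le_cos_of_nonneg_of_le_pi (norm_nonneg _) (by linarith [pi_pos])
      (norm_coe_le_abs_add_intCast_mul θ α m)

lemma Qu_eq {θ : ℝ} (hθ : 0 < θ) (hθπ : θ < π) :
    Qu θ = {x | x.2.2 * cos ‖(x.2.1 : AddCircle θ)‖ ≤ 1} ∩ tL := by
  ext x
  simp only [Qu, Hhalf, Set.mem_iInter, Set.mem_ofPred_eq, Set.mem_inter_iff, forall_and,
    forall_const]
  rw [and_comm (b := x ∈ tL)]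
  exact and_congr_right fun hx => forall_mul_cos_add_le_one_or_iff hθ hθπ hx.1.le _

lemma frontier_setOf_mul_le_one {E : Type*} [TopologicalSpace E] {c : ℝ → ℝ}
    (hc : Continuous c) (hpos : ∀ α, 0 < c α) :
    frontier {x : E × ℝ × ℝ | x.2.2 * c x.2.1 ≤ 1} = {x | x.2.2 * c x.2.1 = 1} := by
  have hf : Continuous fun x : E × ℝ × ℝ => x.2.2 * c x.2.1 := by fun_prop
  refine (frontier_le_subset_eq hf continuous_const).antisymm fun x hx => ?_
  rw [frontier_eq_closure_inter_closure]
  refine ⟨subset_closure (le_of_eq hx), ?_⟩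
  have hpath : Filter.Tendsto (fun r : ℝ => (x.1, x.2.1, r)) (nhdsWithin x.2.2 (Set.Ioi x.2.2))
      (nhds x) :=
    ((by fun_prop : Continuous fun r : ℝ => (x.1, x.2.1, r)).tendsto' _ _ rfl).mono_left
      nhdsWithin_le_nhds
  refine mem_closure_of_tendsto hpath ?_
  filter_upwards [self_mem_nhdsWithin] with r hr
  simp only [Set.mem_compl_iff, Set.mem_ofPred_eq, not_le]
  rw [← show x.2.2 * c x.2.1 = 1 from hx]
  exact mul_lt_mul_of_pos_right hr (hpos _)

lemma isOpen_tL : IsOpen tL :=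
  (isOpen_lt continuous_const (by fun_prop : Continuous fun x : ℂ × ℝ × ℝ => x.2.2)).inter
    (isOpen_lt (by fun_prop : Continuous fun x : ℂ × ℝ × ℝ => ‖x.1‖) (by fun_prop))

lemma lamb_pos {x : ℂ × ℝ × ℝ} (hx : x ∈ tL) : 0 < lamb x :=
  sqrt_pos.2 (by nlinarith [hx.1, hx.2, norm_nonneg x.1])

lemma sqrt_one_add_norm_lamb_inv_smul_sq {x : ℂ × ℝ × ℝ} (hx : x ∈ tL) :
    √(1 + ‖(lamb x)⁻¹ • x.1‖ ^ 2) = x.2.2 / lamb x := by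
  have hl := lamb_pos hx
  have hl2 : lamb x ^ 2 = x.2.2 ^ 2 - ‖x.1‖ ^ 2 :=
    sq_sqrt (by nlinarith [hx.1, hx.2, norm_nonneg x.1])
  rw [norm_smul, norm_inv, norm_of_nonneg hl.le, ← sqrt_sq (div_pos hx.1 hl).le]
  congr 1
  field_simp
  linarith

noncomputable def prismSection (θ : ℝ) (p : ℂ × ℝ) : ℝ :=
  (√(1 + ‖p.1‖ ^ 2) * cos ‖(p.2 : AddCircle θ)‖)⁻¹

lemma prismSection_pos {θ : ℝ} (hθ : 0 < θ) (hθπ : θ < π) (p : ℂ × ℝ) : 0 < prismSection θ p :=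
  inv_pos.2 (mul_pos (sqrt_pos.2 (by positivity)) (AddCircle.cos_norm_coe_pos hθ hθπ p.2))

lemma continuous_prismSection {θ : ℝ} (hθ : 0 < θ) (hθπ : θ < π) : Continuous (prismSection θ) :=
  Continuous.inv₀ (by fun_prop) fun p => (inv_pos.1 (prismSection_pos hθ hθπ p)).ne'

section
variable {θ : ℝ} {x : ℂ × ℝ × ℝ}

lemma prismSection_lamb_inv_smul (hx : x ∈ tL) :
    prismSection θ ((lamb x)⁻¹ • x.1, x.2.1) = lamb x / (x.2.2 * cos ‖(x.2.1 : AddCircle θ)‖) := by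
  rw [prismSection, sqrt_one_add_norm_lamb_inv_smul_sq hx, div_mul_eq_mul_div, inv_div]

lemma lamb_le_prismSection_iff (hθ : 0 < θ) (hθπ : θ < π) (hx : x ∈ tL) :
    lamb x ≤ prismSection θ ((lamb x)⁻¹ • x.1, x.2.1) ↔
      x.2.2 * cos ‖(x.2.1 : AddCircle θ)‖ ≤ 1 := by
  rw [prismSection_lamb_inv_smul hx,
    le_div_iff₀ (mul_pos hx.1 (AddCircle.cos_norm_coe_pos hθ hθπ _)),
    mul_le_iff_le_one_right (lamb_pos hx)]

lemma lamb_eq_prismSection_iff (hθ : 0 < θ) (hθπ : θ < π) (hx : x ∈ tL) :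
    lamb x = prismSection θ ((lamb x)⁻¹ • x.1, x.2.1) ↔
      x.2.2 * cos ‖(x.2.1 : AddCircle θ)‖ = 1 := by
  rw [prismSection_lamb_inv_smul hx,
    eq_div_iff (mul_pos hx.1 (AddCircle.cos_norm_coe_pos hθ hθπ _)).ne',
    mul_eq_left₀ (lamb_pos hx).ne']

end

theorem stmt17 (θ : ℝ) (hθ : 0 < θ) (hθπ : θ < π) :
    ∃ S : ℂ × ℝ → ℝ, Continuous S ∧ (∀ p, 0 < S p) ∧
      Qu θ = {x ∈ tL | lamb x ≤ S ((lamb x)⁻¹ • x.1, x.2.1)} ∧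
      frontier (Qu θ) ∩ tL = {x ∈ tL | lamb x = S ((lamb x)⁻¹ • x.1, x.2.1)} := by
  refine ⟨prismSection θ, continuous_prismSection hθ hθπ, prismSection_pos hθ hθπ, ?_, ?_⟩
  · ext x
    rw [Qu_eq hθ hθπ, Set.mem_inter_iff, and_comm]
    exact and_congr_right fun hx => (lamb_le_prismSection_iff hθ hθπ hx).symm
  · rw [Qu_eq hθ hθπ, frontier_inter_open_inter isOpen_tL,
      frontier_setOf_mul_le_one (by fun_prop) (AddCircle.cos_norm_coe_pos hθ hθπ)]
    ext x
    rw [Set.mem_inter_iff, and_comm]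
    exact and_congr_right fun hx => (lamb_eq_prismSection_iff hθ hθπ hx).symm
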